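/- arXiv:1803.10706 — 9 statements merged into one kernel-verified Lean document; each statement's English description precedes it below -/
import Mathlib

section
/- For every natural number l and all real numbers x and y with x² ≠ 1, the complementary Legendre polynomials satisfy the closed-form generating identity Σ_{ν=0}^{2l} (yᵛ/ν!)·𝒫_ν(x,l) = (1 − y(1+x))^l · (1 + y(1−x))^l; moreover 𝒫_ν(x,l) = 0 for every ν > 2l. -/
/-- Complementary Legendre polynomial
`𝒫_ν(x,l) = (1-x²)^(ν-l) · (dᵛ/dtᵛ)(1-t²)^l |_{t=x}` (zpow power). -/
noncomputable def complLegendre (l ν : ℕ) (x : ℝ) : ℝ :=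
  (1 - x ^ 2) ^ ((ν : ℤ) - (l : ℤ)) *
    iteratedDeriv ν (fun t : ℝ => (1 - t ^ 2) ^ l) x

open Polynomial

lemma iteratedDeriv_eval (p : ℝ[X]) (ν : ℕ) :
    iteratedDeriv ν (fun t : ℝ => p.eval t) = fun x => ((derivative^[ν]) p).eval x := by
  induction ν generalizing p with
  | zero =>
    rw [iteratedDeriv_zero]
    rfl
  | succ n ih =>
    rw [iteratedDeriv_succ']
    have : deriv (fun t : ℝ => p.eval t) = fun t => p.derivative.eval t := by
      funext t; exact p.deriv
    rw [this, ih]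
    funext z
    rw [← Function.iterate_succ_apply]


theorem complLegendre_genFun (l : ℕ) (x y : ℝ) (hx : x ^ 2 ≠ 1) :
    (∑ ν ∈ Finset.range (2 * l + 1),
        y ^ ν / (Nat.factorial ν : ℝ) * complLegendre l ν x)
      = (1 - y * (1 + x)) ^ l * (1 + y * (1 - x)) ^ l ∧
    ∀ ν : ℕ, 2 * l < ν → complLegendre l ν x = 0 := by
  have h1 : (1 : ℝ) - x ^ 2 ≠ 0 := by
    intro h; apply hx; linarith [h]
  set P : ℝ[X] := (1 - X ^ 2) ^ l with hP
  have hfun : (fun t : ℝ => (1 - t ^ 2) ^ l) = fun t => P.eval t := by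
    funext t; simp [hP]
  have hdeg : P.natDegree ≤ 2 * l := by
    calc P.natDegree = l * (1 - X ^ 2 : ℝ[X]).natDegree := natDegree_pow _ _
    _ ≤ l * 2 := by
        gcongr
        have : ((1 : ℝ[X]) - X ^ 2).natDegree ≤ max (1:ℝ[X]).natDegree ((X:ℝ[X])^2).natDegree :=
          natDegree_sub_le _ _
        simpa using this
    _ = 2 * l := by ring
  have hiter : ∀ ν, iteratedDeriv ν (fun t : ℝ => (1 - t ^ 2) ^ l) x
      = ((derivative^[ν]) P).eval x := by
    intro ν; rw [hfun, iteratedDeriv_eval]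
  constructor
  · have key : ∀ ν : ℕ, ((derivative^[ν]) P).eval x
        = (ν.factorial : ℝ) * (taylor x P).coeff ν := by
      intro ν
      have := congrFun (factorial_smul_hasseDeriv (R := ℝ) ν) P
      rw [← this]
      simp [taylor_coeff, mul_comm]
    have hsum : ∑ ν ∈ Finset.range (2 * l + 1),
        y ^ ν / (ν.factorial : ℝ) * complLegendre l ν x
        = (1 - x ^ 2) ^ (-(l:ℤ)) * ∑ ν ∈ Finset.range (2 * l + 1),
            (taylor x P).coeff ν * (y * (1 - x ^ 2)) ^ ν := by
      rw [Finset.mul_sum]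
      apply Finset.sum_congr rfl
      intro ν _
      rw [complLegendre, hiter, key]
      have hz : (1 - x ^ 2 : ℝ) ^ ((ν : ℤ) - (l : ℤ))
          = (1 - x ^ 2) ^ (-(l:ℤ)) * (1 - x ^ 2) ^ ν := by
        rw [zpow_sub₀ h1, zpow_natCast, zpow_neg, zpow_natCast, div_eq_mul_inv, mul_comm]
      rw [hz, mul_pow]
      have hfac : (ν.factorial : ℝ) ≠ 0 := Nat.cast_ne_zero.mpr ν.factorial_ne_zero
      field_simp
    rw [hsum, ← Polynomial.eval_eq_sum_range' (n := 2 * l + 1)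
        (by rw [natDegree_taylor]; omega), taylor_eval]
    have heval : P.eval (y * (1 - x ^ 2) + x)
        = ((1 - x ^ 2) * ((1 - y * (1 + x)) * (1 + y * (1 - x)))) ^ l := by
      simp only [hP, eval_pow, eval_sub, eval_one, eval_X]
      ring
    rw [heval, mul_pow, ← mul_assoc, zpow_neg, zpow_natCast,
      inv_mul_cancel₀ (pow_ne_zero _ h1), one_mul, mul_pow]
  · intro ν hν
    rw [complLegendre, hiter, Polynomial.iterate_derivative_eq_zero (by omega)]
    simp
end

section
/- Fix a real parameter c and natural numbers l and ν. The complementary polynomial 𝒫_ν(·,l) of the confluent hypergeometric equation satisfies, for every real x > 0, the ordinary differential equation x·(d²/dx²)𝒫_ν(x,l) + (l−ν+c−x)·(d/dx)𝒫_ν(x,l) + ν·𝒫_ν(x,l) = 0, where l−ν is taken as an integer. -/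
/-- Complementary polynomial of the confluent hypergeometric equation:
`𝒫_ν(x,l) = x^(1-c+ν-l) · e^x · (dᵛ/dtᵛ)(t^(c-1+l) e^(-t)) |_{t=x}` (rpow powers). -/
noncomputable def complConfluent (c : ℝ) (l ν : ℕ) (x : ℝ) : ℝ :=
  x ^ (1 - c + (ν : ℝ) - (l : ℝ)) * Real.exp x *
    iteratedDeriv ν (fun t : ℝ => t ^ (c - 1 + (l : ℝ)) * Real.exp (-t)) x

/-!
The function `f t = t ^ a * exp (-t)`, with `a = c - 1 + l`, solves the first-order equation
`t f' = (a - t) f`. Differentiating it `ν + 1` times by Leibniz's rule gives the second-order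
equation `x g'' + (ν + 1 - a + x) g' + (ν + 1) g = 0` for `g = f⁽ᵛ⁾`, and the gauge
transformation `𝒫 = x ^ (ν - a) * exp x * g` turns it into the stated equation.
-/

open Set Filter Topology Real
open scoped ContDiff

section IteratedDeriv

variable {𝕜 : Type*} [NontriviallyNormedField 𝕜] {f : 𝕜 → 𝕜} {s : Set 𝕜} {x : 𝕜}

theorem ContDiffOn.hasDerivAt_iteratedDeriv {m : WithTop ℕ∞} {n : ℕ}
    (hf : ContDiffOn 𝕜 m f s) (hn : n < m) (hs : IsOpen s) (hx : x ∈ s) :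
    HasDerivAt (iteratedDeriv n f) (iteratedDeriv (n + 1) f x) x := by
  have hdiff : DifferentiableOn 𝕜 (iteratedDeriv n f) s :=
    (hf.differentiableOn_iteratedDerivWithin hn hs.uniqueDiffOn).congr
      fun y hy => (iteratedDerivWithin_of_isOpen hs hy).symm
  rw [iteratedDeriv_succ]
  exact ((hdiff x hx).differentiableAt (hs.mem_nhds hx)).hasDerivAt

theorem iteratedDeriv_two_eq_of_hasDerivAt {f' : 𝕜 → 𝕜} {f'' : 𝕜}
    (hf : ∀ᶠ y in 𝓝 x, HasDerivAt f (f' y) y) (hf' : HasDerivAt f' f'' x) :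
    iteratedDeriv 2 f x = f'' := by
  have hderiv : deriv f =ᶠ[𝓝 x] f' := hf.mono fun _ hy => hy.deriv
  rw [iteratedDeriv_succ, iteratedDeriv_one, hderiv.deriv_eq, hf'.deriv]

theorem iteratedDeriv_succ_mul_of_hasDerivAt_const {ℓ : 𝕜 → 𝕜} {q : 𝕜}
    (hℓ : ∀ t, HasDerivAt ℓ q t) (hf : ContDiffOn 𝕜 ∞ f s) (hs : IsOpen s) (n : ℕ)
    (hx : x ∈ s) :
    iteratedDeriv (n + 1) (fun t => ℓ t * f t) x
      = ℓ x * iteratedDeriv (n + 1) f x + (n + 1) * q * iteratedDeriv n f x := by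
  have hf_deriv (m : ℕ) {y : 𝕜} (hy : y ∈ s) :=
    hf.hasDerivAt_iteratedDeriv (n := m) (by exact_mod_cast ENat.natCast_lt_top m) hs hy
  induction n generalizing x with
  | zero =>
    have hf0 := hf_deriv 0 hx
    rw [iteratedDeriv_zero, zero_add, iteratedDeriv_one] at hf0
    rw [zero_add, iteratedDeriv_one, ((hℓ x).fun_mul hf0).deriv, iteratedDeriv_one,
      iteratedDeriv_zero]
    push_cast
    ring
  | succ n ih =>
    have hderiv : HasDerivAt
        (fun y => ℓ y * iteratedDeriv (n + 1) f y + (n + 1) * q * iteratedDeriv n f y)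
        (q * iteratedDeriv (n + 1) f x + ℓ x * iteratedDeriv (n + 2) f x
          + (n + 1) * q * iteratedDeriv (n + 1) f x) x :=
      ((hℓ x).fun_mul (hf_deriv (n + 1) hx)).add ((hf_deriv n hx).const_mul _)
    have hih : iteratedDeriv (n + 1) (fun t => ℓ t * f t) =ᶠ[𝓝 x]
        fun y => ℓ y * iteratedDeriv (n + 1) f y + (n + 1) * q * iteratedDeriv n f y :=
      eventually_of_mem (hs.mem_nhds hx) fun _ hy => ih hy
    rw [iteratedDeriv_succ, hih.deriv_eq, hderiv.deriv]
    push_cast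
    ring

end IteratedDeriv

theorem hasDerivAt_rpow_mul_exp_const_mul (b k : ℝ) {y : ℝ} (hy : 0 < y) :
    HasDerivAt (fun t => t ^ b * exp (k * t)) ((b + k * y) * (y ^ (b - 1) * exp (k * y))) y := by
  have h := (hasDerivAt_rpow_const (p := b) (Or.inl hy.ne')).fun_mul
    (((hasDerivAt_id' y).const_mul k).exp)
  refine h.congr_deriv ?_
  rw [rpow_sub_one hy.ne']
  field_simp

theorem iteratedDeriv_ode_of_mul_deriv_eqOn {u : ℝ → ℝ} {s : Set ℝ} {a : ℝ}
    (hu : ContDiffOn ℝ ∞ u s) (hs : IsOpen s)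
    (hode : EqOn (fun t => t * deriv u t) (fun t => (a - t) * u t) s) (n : ℕ) {x : ℝ}
    (hx : x ∈ s) :
    x * iteratedDeriv (n + 2) u x + (n + 1 - a + x) * iteratedDeriv (n + 1) u x
      + (n + 1) * iteratedDeriv n u x = 0 := by
  have h := hode.iteratedDeriv_of_isOpen hs (n + 1) hx
  rw [iteratedDeriv_succ_mul_of_hasDerivAt_const (fun t => hasDerivAt_id' t)
      (hu.deriv_of_isOpen hs (by simp)) hs n hx,
    iteratedDeriv_succ_mul_of_hasDerivAt_const (fun t => (hasDerivAt_id' t).const_sub a) hu hs n hx,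
    ← iteratedDeriv_succ', ← iteratedDeriv_succ'] at h
  linear_combination h

theorem contDiffOn_rpow_mul_exp_neg (a : ℝ) :
    ContDiffOn ℝ ∞ (fun t => t ^ a * exp (-t)) (Ioi 0) := fun _ hy =>
  ((contDiffAt_rpow_const_of_ne (ne_of_gt hy)).mul
    (contDiff_exp.comp contDiff_neg).contDiffAt).contDiffWithinAt

theorem mul_deriv_rpow_mul_exp_neg_eqOn (a : ℝ) :
    EqOn (fun t => t * deriv (fun t => t ^ a * exp (-t)) t)
      (fun t => (a - t) * (t ^ a * exp (-t))) (Ioi 0) := by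
  intro y (hy : 0 < y)
  have h : HasDerivAt (fun t => t ^ a * exp (-t)) ((a + -y) * (y ^ (a - 1) * exp (-y))) y := by
    simpa only [neg_one_mul] using hasDerivAt_rpow_mul_exp_const_mul a (-1) hy
  simp only [h.deriv, rpow_sub_one hy.ne']
  field_simp
  ring

theorem rpow_mul_exp_mul_ode_of_ode {g g' : ℝ → ℝ} {g'' b κ x : ℝ} (hx : 0 < x)
    (hg : ∀ᶠ y in 𝓝 x, HasDerivAt g (g' y) y) (hg' : HasDerivAt g' g'' x)
    (hode : x * g'' + (b + 1 + x) * g' x + (κ + 1) * g x = 0) :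
    x * iteratedDeriv 2 (fun t => t ^ b * exp t * g t) x
      + (1 - b - x) * deriv (fun t => t ^ b * exp t * g t) x + κ * (x ^ b * exp x * g x) = 0 := by
  have hh (b : ℝ) {y : ℝ} (hy : 0 < y) :
      HasDerivAt (fun t => t ^ b * exp t) ((b + y) * (y ^ (b - 1) * exp y)) y := by
    simpa only [one_mul] using hasDerivAt_rpow_mul_exp_const_mul b 1 hy
  have hP : ∀ᶠ y in 𝓝 x, HasDerivAt (fun t => t ^ b * exp t * g t)
      ((b + y) * (y ^ (b - 1) * exp y) * g y + y ^ b * exp y * g' y) y := by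
    filter_upwards [hg, Ioi_mem_nhds hx] with y hgy hy
    exact (hh b hy).fun_mul hgy
  have hP' : HasDerivAt (fun y => (b + y) * (y ^ (b - 1) * exp y) * g y + y ^ b * exp y * g' y)
      (((1 * (x ^ (b - 1) * exp x) + (b + x) * ((b - 1 + x) * (x ^ (b - 1 - 1) * exp x))) * g x
        + (b + x) * (x ^ (b - 1) * exp x) * g' x)
        + ((b + x) * (x ^ (b - 1) * exp x) * g' x + x ^ b * exp x * g'')) x :=
    ((((hasDerivAt_id' x).const_add b).fun_mul (hh (b - 1) hx)).fun_mul hg.self_of_nhds).add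
      ((hh b hx).fun_mul hg')
  have hpow₁ : x ^ (b - 1) = x ^ (b - 1 - 1) * x := by
    rw [rpow_sub_one hx.ne' (b - 1)]; field_simp
  have hpow₀ : x ^ b = x ^ (b - 1 - 1) * x * x := by
    rw [← hpow₁, rpow_sub_one hx.ne']; field_simp
  rw [iteratedDeriv_two_eq_of_hasDerivAt hP hP', hP.self_of_nhds.deriv, hpow₀, hpow₁]
  -- the left-hand side is `x ^ b * exp x` times the equation for `g`
  linear_combination (x ^ (b - 1 - 1) * x * x * exp x) * hode

theorem complConfluent_ode (c : ℝ) (l ν : ℕ) (x : ℝ) (hx : 0 < x) :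
    x * iteratedDeriv 2 (fun t => complConfluent c l ν t) x
      + ((((l : ℤ) - (ν : ℤ) : ℤ) : ℝ) + c - x)
          * deriv (fun t => complConfluent c l ν t) x
      + (ν : ℝ) * complConfluent c l ν x = 0 := by
  set a : ℝ := c - 1 + l
  have hf := contDiffOn_rpow_mul_exp_neg a
  have hderiv (m : ℕ) {y : ℝ} (hy : 0 < y) :=
    hf.hasDerivAt_iteratedDeriv (n := m) (by exact_mod_cast ENat.natCast_lt_top m) isOpen_Ioi hy
  have hode :=
    iteratedDeriv_ode_of_mul_deriv_eqOn hf isOpen_Ioi (mul_deriv_rpow_mul_exp_neg_eqOn a) ν hx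
  have key := rpow_mul_exp_mul_ode_of_ode (b := 1 - c + ν - l) (κ := ν) hx
    (eventually_of_mem (Ioi_mem_nhds hx) fun _ hy => hderiv ν hy) (hderiv (ν + 1) hx)
    (by linear_combination hode)
  unfold complConfluent
  rw [show (((l : ℤ) - ν : ℤ) : ℝ) + c - x = 1 - (1 - c + ν - l) - x by push_cast; ring]
  exact key
end

section
/- Fix a real parameter c and natural numbers l and ν. For every real x > 0, the complementary polynomial of the confluent hypergeometric equation has the explicit form 𝒫_ν(x,l) = Σ_{μ=0}^{ν} C(c−1+l, ν−μ) · (ν!/μ!) · (−x)^μ, where C(r,k) = (∏_{i=0}^{k−1}(r−i))/k! is the generalized binomial coefficient. -/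
/-- Generalized binomial coefficient `C(r,k) = (∏_{i<k} (r-i)) / k!`. -/
noncomputable def genBinom (r : ℝ) (k : ℕ) : ℝ :=
  (∏ i ∈ Finset.range k, (r - (i : ℝ))) / (Nat.factorial k : ℝ)

open Real Finset
open scoped Nat

theorem iteratedDeriv_rpow_const (r x : ℝ) (k : ℕ) :
    iteratedDeriv k (fun t : ℝ => t ^ r) x = (descPochhammer ℝ k).eval r * x ^ (r - k) := by
  rw [iteratedDeriv_eq_iterate, iter_deriv_rpow_const]

theorem iteratedDeriv_exp_neg (n : ℕ) (x : ℝ) :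
    iteratedDeriv n (fun t : ℝ => exp (-t)) x = (-1) ^ n * exp (-x) := by
  simpa using congrFun (iteratedDeriv_exp_const_mul n (-1)) x

theorem iteratedDeriv_rpow_mul_exp_neg {x : ℝ} (hx : x ≠ 0) (a : ℝ) (n : ℕ) :
    iteratedDeriv n (fun t : ℝ => t ^ a * exp (-t)) x =
      ∑ i ∈ range (n + 1),
        n.choose i * (descPochhammer ℝ i).eval a * x ^ (a - i) * ((-1) ^ (n - i) * exp (-x)) := by
  rw [iteratedDeriv_fun_mul (contDiffAt_rpow_const (Or.inl hx)) (by fun_prop)]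
  simp only [iteratedDeriv_rpow_const, iteratedDeriv_exp_neg, mul_assoc]

theorem genBinom_eq_descPochhammer_div (r : ℝ) (k : ℕ) :
    genBinom r k = (descPochhammer ℝ k).eval r / k ! := by
  rw [genBinom, descPochhammer_eval_eq_prod_range]

theorem choose_mul_descPochhammer_eq_genBinom_mul {μ ν : ℕ} (h : μ ≤ ν) (r : ℝ) :
    (ν.choose μ : ℝ) * (descPochhammer ℝ (ν - μ)).eval r = genBinom r (ν - μ) * (ν ! / μ !) := by
  rw [genBinom_eq_descPochhammer_div, Nat.cast_choose ℝ h]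
  field_simp

theorem complConfluent_explicit (c : ℝ) (l ν : ℕ) (x : ℝ) (hx : 0 < x) :
    complConfluent c l ν x
      = ∑ μ ∈ Finset.range (ν + 1),
          genBinom (c - 1 + (l : ℝ)) (ν - μ)
            * ((Nat.factorial ν : ℝ) / (Nat.factorial μ : ℝ)) * (-x) ^ μ := by
  rw [complConfluent, iteratedDeriv_rpow_mul_exp_neg hx.ne', mul_sum, ← sum_range_reflect]
  refine sum_congr rfl fun μ hμ => ?_
  have hμν : μ ≤ ν := Nat.lt_succ_iff.mp (mem_range.mp hμ)
  have hpow : x ^ (1 - c + ν - l) * x ^ (c - 1 + l - ↑(ν - μ)) = x ^ μ := by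
    rw [← rpow_add hx, Nat.cast_sub hμν, ← rpow_natCast]
    congr 1
    ring
  have hexp : exp x * exp (-x) = 1 := by rw [← exp_add, add_neg_cancel, exp_zero]
  rw [add_tsub_cancel_right, Nat.sub_sub_self hμν, Nat.choose_symm hμν, neg_pow,
    ← choose_mul_descPochhammer_eq_genBinom_mul hμν]
  linear_combination (↑(ν.choose μ) * (descPochhammer ℝ (ν - μ)).eval (c - 1 + l) * (-1) ^ μ) *
    (x ^ μ * hexp + exp x * exp (-x) * hpow)
end

section
/- Fix a real parameter c and a natural number l. For every real x > 0 and every real y with |y| < 1, the series Σ_{ν=0}^{∞} (yᵛ/ν!)·𝒫_ν(x,l) converges, with sum equal to the closed-form generating function (1+y)^{c−1+l} · e^{−xy} (the power (1+y)^{c−1+l} being a real power of the positive real 1+y). -/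
/-!
Up to the factor `x ^ (-(c - 1 + l)) * exp x`, the series is the Taylor series at `x` of
`f t = t ^ (c - 1 + l) * exp (-t)`, evaluated at `x + x * y = x * (1 + y)`. Since `f` is the
restriction of a function holomorphic on the slit plane, which contains the disc of radius `x`
about `x`, Cauchy's theory makes this Taylor series converge to `f` on `(0, 2x)`.
-/

open Complex Metric Set Topology
open scoped Nat

theorem AnalyticOnNhd.iteratedDeriv {𝕜 F : Type*} [NontriviallyNormedField 𝕜] [NormedAddCommGroup F]
    [NormedSpace 𝕜 F] [CompleteSpace F] {f : 𝕜 → F} {s : Set 𝕜} (h : AnalyticOnNhd 𝕜 f s)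
    (n : ℕ) : AnalyticOnNhd 𝕜 (iteratedDeriv n f) s := by
  induction n with
  | zero => simpa
  | succ n ih => rw [iteratedDeriv_succ]; exact ih.deriv

theorem iteratedDeriv_re_comp_ofReal {F : ℂ → ℂ} {U : Set ℂ} (hU : IsOpen U)
    (hF : DifferentiableOn ℂ F U) (n : ℕ) {t : ℝ} (ht : (t : ℂ) ∈ U) :
    iteratedDeriv n (fun s : ℝ => (F s).re) t = (iteratedDeriv n F t).re := by
  induction n generalizing t with
  | zero => simp
  | succ n ih =>
    have hev : iteratedDeriv n (fun s : ℝ => (F s).re) =ᶠ[𝓝 t]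
        fun s : ℝ => (iteratedDeriv n F s).re :=
      Filter.mem_of_superset ((hU.preimage continuous_ofReal).mem_nhds ht) fun s hs => ih hs
    rw [iteratedDeriv_succ, hev.deriv_eq, iteratedDeriv_succ]
    exact (((hF.analyticOnNhd hU).iteratedDeriv n t ht).differentiableAt.hasDerivAt
      |>.real_of_complex).deriv

theorem Real.hasSum_taylorSeries_of_complex_extension {f : ℝ → ℝ} {F : ℂ → ℂ} {x r h : ℝ}
    (hF : DifferentiableOn ℂ F (ball (x : ℂ) r)) (hFf : ∀ t ∈ ball x r, F t = f t)
    (hh : |h| < r) :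
    HasSum (fun n => h ^ n / n ! * iteratedDeriv n f x) (f (x + h)) := by
  have hx : x ∈ ball x r := mem_ball_self ((abs_nonneg h).trans_lt hh)
  have hfF : EqOn f (fun s : ℝ => (F s).re) (ball x r) := fun t ht => by simp [hFf t ht]
  have hderiv (n : ℕ) : iteratedDeriv n f x = (iteratedDeriv n F x).re := by
    rw [hfF.iteratedDeriv_of_isOpen isOpen_ball n hx,
      iteratedDeriv_re_comp_ofReal isOpen_ball hF n (by simpa using hx)]
  have hxh : x + h ∈ ball x r := by simpa [Real.dist_eq] using hh
  have hz : ((x + h : ℝ) : ℂ) ∈ ball (x : ℂ) r := by simpa [Complex.dist_eq] using hh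
  have hsum := (Complex.hasSum_taylorSeries_on_ball hF hz).mapL reCLM
  simp only [hFf _ hxh, reCLM_apply, ofReal_re] at hsum
  convert hsum using 2 with n
  rw [hderiv, ← ofReal_sub, add_sub_cancel_left, smul_eq_mul, smul_eq_mul, ← ofReal_pow,
    ← ofReal_natCast, ← ofReal_inv, ← mul_assoc, ← ofReal_mul, re_ofReal_mul]
  ring

theorem Complex.ball_self_subset_slitPlane (x : ℝ) : ball (x : ℂ) x ⊆ slitPlane := by
  intro z hz
  refine Or.inl ?_
  have := (abs_re_le_norm (z - x)).trans_lt (mem_ball_iff_norm.1 hz)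
  rw [sub_re, ofReal_re] at this
  linarith [abs_lt.1 this]

theorem Complex.differentiableOn_cpow_const_mul_exp_neg (a : ℂ) :
    DifferentiableOn ℂ (fun z : ℂ => z ^ a * exp (-z)) slitPlane := fun z hz =>
  ((differentiableAt_id.cpow_const hz).mul (differentiable_exp.comp differentiable_neg z))
    |>.differentiableWithinAt

theorem Real.hasSum_taylorSeries_rpow_mul_exp_neg (a : ℝ) {x h : ℝ} (hh : |h| < x) :
    HasSum (fun n => h ^ n / n ! * iteratedDeriv n (fun t => t ^ a * Real.exp (-t)) x)
      ((x + h) ^ a * Real.exp (-(x + h))) := by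
  refine Real.hasSum_taylorSeries_of_complex_extension
    ((differentiableOn_cpow_const_mul_exp_neg a).mono (ball_self_subset_slitPlane x)) ?_ hh
  intro t ht
  have ht₀ : 0 ≤ t := by
    have := abs_lt.1 (mem_ball_iff_norm.1 ht); linarith
  push_cast [ofReal_cpow ht₀]
  rfl

theorem complConfluent_genFun (c : ℝ) (l : ℕ) (x y : ℝ) (hx : 0 < x) (hy : |y| < 1) :
    HasSum (fun ν : ℕ => y ^ ν / (Nat.factorial ν : ℝ) * complConfluent c l ν x)
      ((1 + y) ^ (c - 1 + (l : ℝ)) * Real.exp (-(x * y))) := by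
  set a : ℝ := c - 1 + l
  have hxy : |x * y| < x := by
    rw [abs_mul, abs_of_pos hx]
    exact mul_lt_of_lt_one_right hx hy
  have hterm (ν : ℕ) : y ^ ν / ν ! * complConfluent c l ν x = x ^ (-a) * Real.exp x *
      ((x * y) ^ ν / ν ! * iteratedDeriv ν (fun t => t ^ a * Real.exp (-t)) x) := by
    rw [complConfluent, show 1 - c + ν - l = ν + -a by ring, Real.rpow_add hx, Real.rpow_natCast,
      mul_pow]
    ring
  have hsum : (1 + y) ^ a * Real.exp (-(x * y)) =
      x ^ (-a) * Real.exp x * ((x + x * y) ^ a * Real.exp (-(x + x * y))) := by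
    rw [show x + x * y = x * (1 + y) by ring, Real.mul_rpow hx.le (by linarith [abs_lt.1 hy]),
      Real.rpow_neg hx.le, show -(x * (1 + y)) = -x + -(x * y) by ring, Real.exp_add,
      Real.exp_neg x]
    field_simp [(Real.rpow_pos_of_pos hx a).ne', (Real.exp_pos x).ne']
  rw [funext hterm, hsum]
  exact (Real.hasSum_taylorSeries_rpow_mul_exp_neg a hxy).mul_left _
end

section
/- Fix a real parameter c and natural numbers l and ν with ν ≥ 1. For every real x > 0, the complementary polynomials of the confluent hypergeometric equation satisfy the three-term recursion (c−1+l−ν−x)·𝒫_ν(x,l) = ν·x·𝒫_{ν−1}(x,l) + 𝒫_{ν+1}(x,l). -/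
open Real Set

private noncomputable def FF (a : ℝ) : ℝ → ℝ := fun t => t ^ a * Real.exp (-t)

private lemma contDiffOn_FF (a : ℝ) : ContDiffOn ℝ ⊤ (FF a) (Set.Ioi 0) := by
  intro x hx
  exact (((Real.contDiffAt_rpow_const_of_ne (ne_of_gt hx)).mul
    ((Real.contDiff_exp.comp contDiff_neg).contDiffAt))).contDiffWithinAt

private lemma iteratedDerivWithin_isOpen {n : ℕ} {f : ℝ → ℝ} {s : Set ℝ} (hs : IsOpen s)
    {x : ℝ} (hx : x ∈ s) : iteratedDerivWithin n f s x = iteratedDeriv n f x := by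
  simp only [iteratedDerivWithin, iteratedDeriv, iteratedFDerivWithin_of_isOpen n hs hx]

private lemma diffAt_FF (a : ℝ) (n : ℕ) {x : ℝ} (hx : 0 < x) :
    DifferentiableAt ℝ (iteratedDeriv n (FF a)) x := by
  have h1 : DifferentiableWithinAt ℝ (iteratedDerivWithin n (FF a) (Set.Ioi 0)) (Set.Ioi 0) x :=
    (contDiffOn_FF a).differentiableOn_iteratedDerivWithin
      (by exact_mod_cast WithTop.coe_lt_top (n : ℕ∞)) (uniqueDiffOn_Ioi 0) x hx
  have h2 : DifferentiableWithinAt ℝ (iteratedDeriv n (FF a)) (Set.Ioi 0) x :=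
    h1.congr (fun y hy => (iteratedDerivWithin_isOpen isOpen_Ioi hy).symm)
      (iteratedDerivWithin_isOpen isOpen_Ioi hx).symm
  exact h2.differentiableAt (isOpen_Ioi.mem_nhds hx)

private lemma hasDeriv_FF (a : ℝ) (n : ℕ) {x : ℝ} (hx : 0 < x) :
    HasDerivAt (iteratedDeriv n (FF a)) (iteratedDeriv (n + 1) (FF a) x) x := by
  rw [iteratedDeriv_succ]
  exact (diffAt_FF a n hx).hasDerivAt

private lemma base_FF (a : ℝ) {x : ℝ} (hx : 0 < x) :
    x * iteratedDeriv 1 (FF a) x = (a - x) * FF a x := by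
  have h1 : HasDerivAt (fun t : ℝ => t ^ a) (a * x ^ (a - 1)) x :=
    Real.hasDerivAt_rpow_const (Or.inl hx.ne')
  have h2 : HasDerivAt (fun t : ℝ => Real.exp (-t)) (Real.exp (-x) * (-1)) x :=
    (Real.hasDerivAt_exp (-x)).comp x ((hasDerivAt_neg x))
  have h3 : HasDerivAt (FF a) (a * x ^ (a - 1) * Real.exp (-x) + x ^ a * (Real.exp (-x) * (-1))) x :=
    h1.mul h2
  rw [iteratedDeriv_one, h3.deriv]
  have hxp : x * x ^ (a - 1) = x ^ a := by
    rw [Real.rpow_sub hx, Real.rpow_one]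
    field_simp
  simp only [FF]
  linear_combination (a * Real.exp (-x)) * hxp

private lemma diff_step_FF (a : ℝ) (m p : ℕ) (b k : ℝ)
    (H : ∀ y : ℝ, 0 < y → y * iteratedDeriv (m + 1) (FF a) y
      = (b - y) * iteratedDeriv m (FF a) y - k * iteratedDeriv p (FF a) y)
    {x : ℝ} (hx : 0 < x) :
    x * iteratedDeriv (m + 2) (FF a) x
      = (b - 1 - x) * iteratedDeriv (m + 1) (FF a) x - iteratedDeriv m (FF a) x
        - k * iteratedDeriv (p + 1) (FF a) x := by
  have h1 : HasDerivAt (fun y : ℝ => y * iteratedDeriv (m + 1) (FF a) y)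
      (1 * iteratedDeriv (m + 1) (FF a) x + x * iteratedDeriv (m + 2) (FF a) x) x :=
    (hasDerivAt_id x).mul (hasDeriv_FF a (m + 1) hx)
  have h2 : HasDerivAt (fun y : ℝ => (b - y) * iteratedDeriv m (FF a) y
        - k * iteratedDeriv p (FF a) y)
      (((0 - 1) * iteratedDeriv m (FF a) x + (b - x) * iteratedDeriv (m + 1) (FF a) x)
        - (0 * iteratedDeriv p (FF a) x + k * iteratedDeriv (p + 1) (FF a) x)) x :=
    (((hasDerivAt_const x b).sub (hasDerivAt_id x)).mul (hasDeriv_FF a m hx)).sub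
      ((hasDerivAt_const x k).mul (hasDeriv_FF a p hx))
  have heq : (fun y : ℝ => y * iteratedDeriv (m + 1) (FF a) y)
      =ᶠ[nhds x] (fun y : ℝ => (b - y) * iteratedDeriv m (FF a) y - k * iteratedDeriv p (FF a) y) := by
    filter_upwards [isOpen_Ioi.mem_nhds hx] with y hy
    exact H y hy
  have h3 := h2.congr_of_eventuallyEq heq
  have := h1.unique h3
  linarith [this]

private lemma rec_FF (a : ℝ) (n : ℕ) : ∀ x : ℝ, 0 < x →
    x * iteratedDeriv (n + 1) (FF a) x
      = (a - (n : ℝ) - x) * iteratedDeriv n (FF a) x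
        - (n : ℝ) * iteratedDeriv (n - 1) (FF a) x := by
  induction n with
  | zero =>
    intro x hx
    simpa [iteratedDeriv_zero] using base_FF a hx
  | succ n ih =>
    intro x hx
    cases n with
    | zero =>
      have H : ∀ y : ℝ, 0 < y → y * iteratedDeriv (0 + 1) (FF a) y
          = (a - y) * iteratedDeriv 0 (FF a) y - 0 * iteratedDeriv 0 (FF a) y := by
        intro y hy
        simpa [iteratedDeriv_zero] using base_FF a hy
      have := diff_step_FF a 0 0 a 0 H hx
      push_cast at this ⊢
      linarith [this]
    | succ n =>
      have H : ∀ y : ℝ, 0 < y → y * iteratedDeriv (n + 1 + 1) (FF a) y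
          = ((a - (n + 1 : ℕ)) - y) * iteratedDeriv (n + 1) (FF a) y
            - ((n + 1 : ℕ) : ℝ) * iteratedDeriv n (FF a) y := by
        intro y hy
        have := ih y hy
        push_cast at this ⊢
        simpa using by linarith [this]
      have := diff_step_FF a (n + 1) n (a - ((n + 1 : ℕ) : ℝ)) ((n + 1 : ℕ) : ℝ) H hx
      push_cast at this ⊢
      linarith [this]

theorem complConfluent_three_term (c : ℝ) (l ν : ℕ) (hν : 1 ≤ ν) (x : ℝ) (hx : 0 < x) :
    (c - 1 + (l : ℝ) - (ν : ℝ) - x) * complConfluent c l ν x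
      = (ν : ℝ) * x * complConfluent c l (ν - 1) x + complConfluent c l (ν + 1) x := by
  set a : ℝ := c - 1 + (l : ℝ) with ha
  have hfun : (fun t : ℝ => t ^ (c - 1 + (l : ℝ)) * Real.exp (-t)) = FF a := rfl
  obtain ⟨m, rfl⟩ : ∃ m, ν = m + 1 := ⟨ν - 1, (Nat.succ_pred_eq_of_pos hν).symm⟩
  have hrec := rec_FF a (m + 1) x hx
  simp only [Nat.add_sub_cancel] at hrec ⊢
  simp only [complConfluent, hfun]
  -- powers
  have e1 : x ^ (1 - c + ((m + 1 : ℕ) : ℝ) - (l : ℝ)) = x ^ (((m + 1 : ℕ) : ℝ) - a) := by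
    rw [ha]; ring_nf
  have e2 : x ^ (1 - c + ((m : ℕ) : ℝ) - (l : ℝ)) * x = x ^ (((m + 1 : ℕ) : ℝ) - a) := by
    rw [ha, ← Real.rpow_add_one hx.ne']
    push_cast; ring_nf
  have e3 : x ^ (1 - c + ((m + 1 + 1 : ℕ) : ℝ) - (l : ℝ)) = x ^ (((m + 1 : ℕ) : ℝ) - a) * x := by
    rw [ha, ← Real.rpow_add_one hx.ne']
    push_cast; ring_nf
  push_cast at hrec ⊢
  push_cast at e1 e2 e3
  rw [e1, e3]
  linear_combination (-(x ^ ((m : ℝ) + 1 - a) * Real.exp x)) * hrec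
    - (((m : ℝ) + 1) * Real.exp x * iteratedDeriv m (FF a) x) * e2
end

section
/- Fix real parameters a, b, c. For all natural numbers l₁, l₂, l with l ≤ l₁ + l₂, every natural number ν, and every real x with 0 < x < 1, the complementary polynomials of the hypergeometric equation satisfy the composition law Σ_{ν₁=0}^{ν} binom(ν,ν₁)·𝒫_{ν₁}(x,l₁)·𝒫_{ν−ν₁}(x,l₂) = Σ_{ν₁=0}^{ν} binom(ν,ν₁)·𝒫_{ν₁}(x,l₁+l₂−l)·𝒫_{ν−ν₁}(x,l). -/
/-!
On `(0, 1)` the weight `t ^ (c - 1 + l) * (1 - t) ^ (l + a + b - c)` behind `𝒫_ν(x, l)` is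
multiplicative in `l` up to a change of parameters: the product of the weights for `l₁` and `l₂`
is the weight for `l₁ + l₂` with parameters `(2a, 2b - 1, 2c - 1)`, and the prefactors multiply
in the same way. By the Leibniz rule, the left-hand side of the composition law is therefore
`𝒫_ν(x, l₁ + l₂)` for these parameters, which depends on `l₁, l₂` only through `l₁ + l₂`.
-/

/-- Complementary polynomial of the hypergeometric equation:
`𝒫_ν(x,l) = x^(ν+1-c-l) (1-x)^(ν-l+c-a-b) (dᵛ/dtᵛ)(t^(c-1+l)(1-t)^(l+a+b-c)) |_{t=x}`
(rpow powers). -/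
noncomputable def complHypergeom (a b c : ℝ) (l ν : ℕ) (x : ℝ) : ℝ :=
  x ^ ((ν : ℝ) + 1 - c - (l : ℝ)) * (1 - x) ^ ((ν : ℝ) - (l : ℝ) + c - a - b) *
    iteratedDeriv ν
      (fun t : ℝ => t ^ (c - 1 + (l : ℝ)) * (1 - t) ^ ((l : ℝ) + a + b - c)) x

open Topology

lemma contDiffAt_rpow_mul_one_sub_rpow {x : ℝ} (hx0 : x ≠ 0) (hx1 : x ≠ 1) (p q : ℝ)
    {n : WithTop ℕ∞} : ContDiffAt ℝ n (fun t : ℝ => t ^ p * (1 - t) ^ q) x :=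
  (Real.contDiffAt_rpow_const_of_ne hx0).mul
    ((Real.contDiffAt_rpow_const_of_ne (sub_ne_zero.2 hx1.symm)).comp x
      (contDiffAt_const.sub contDiffAt_id))

lemma rpow_mul_one_sub_rpow_mul_of_add {t p₁ q₁ p₂ q₂ p q : ℝ} (ht0 : 0 < t) (ht1 : t < 1)
    (hp : p₁ + p₂ = p) (hq : q₁ + q₂ = q) :
    t ^ p₁ * (1 - t) ^ q₁ * (t ^ p₂ * (1 - t) ^ q₂) = t ^ p * (1 - t) ^ q := by
  rw [← hp, ← hq, Real.rpow_add ht0, Real.rpow_add (by linarith : 0 < 1 - t)]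
  ring

theorem sum_choose_mul_complHypergeom_mul_complHypergeom (a b c : ℝ) (l₁ l₂ ν : ℕ) {x : ℝ}
    (hx0 : 0 < x) (hx1 : x < 1) :
    ∑ ν₁ ∈ Finset.range (ν + 1),
        (ν.choose ν₁ : ℝ) * complHypergeom a b c l₁ ν₁ x * complHypergeom a b c l₂ (ν - ν₁) x
      = complHypergeom (2 * a) (2 * b - 1) (2 * c - 1) (l₁ + l₂) ν x := by
  have hweight : (fun t : ℝ => t ^ (c - 1 + l₁) * (1 - t) ^ (l₁ + a + b - c)
        * (t ^ (c - 1 + l₂) * (1 - t) ^ (l₂ + a + b - c)))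
      =ᶠ[𝓝 x] fun t => t ^ (2 * c - 1 - 1 + ((l₁ + l₂ : ℕ) : ℝ))
        * (1 - t) ^ (((l₁ + l₂ : ℕ) : ℝ) + 2 * a + (2 * b - 1) - (2 * c - 1)) := by
    filter_upwards [Ioo_mem_nhds hx0 hx1] with t ht
    exact rpow_mul_one_sub_rpow_mul_of_add ht.1 ht.2 (by push_cast; ring) (by push_cast; ring)
  rw [complHypergeom, ← (hweight.iteratedDeriv ν).eq_of_nhds,
    iteratedDeriv_fun_mul (contDiffAt_rpow_mul_one_sub_rpow hx0.ne' hx1.ne _ _)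
      (contDiffAt_rpow_mul_one_sub_rpow hx0.ne' hx1.ne _ _), Finset.mul_sum]
  refine Finset.sum_congr rfl fun ν₁ hν₁ => ?_
  have hcast : ((ν - ν₁ : ℕ) : ℝ) = ν - ν₁ :=
    Nat.cast_sub (Nat.lt_succ_iff.mp (Finset.mem_range.mp hν₁))
  rw [← rpow_mul_one_sub_rpow_mul_of_add hx0 hx1
    (p₁ := ν₁ + 1 - c - l₁) (q₁ := ν₁ - l₁ + c - a - b)
    (p₂ := (ν - ν₁ : ℕ) + 1 - c - l₂) (q₂ := (ν - ν₁ : ℕ) - l₂ + c - a - b)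
    (by rw [hcast]; push_cast; ring) (by rw [hcast]; push_cast; ring)]
  simp only [complHypergeom]
  ring

theorem complHypergeom_composition (a b c : ℝ) (l₁ l₂ l : ℕ) (hl : l ≤ l₁ + l₂)
    (ν : ℕ) (x : ℝ) (hx0 : 0 < x) (hx1 : x < 1) :
    (∑ ν₁ ∈ Finset.range (ν + 1),
        (Nat.choose ν ν₁ : ℝ) * complHypergeom a b c l₁ ν₁ x
          * complHypergeom a b c l₂ (ν - ν₁) x)
      = ∑ ν₁ ∈ Finset.range (ν + 1),
          (Nat.choose ν ν₁ : ℝ) * complHypergeom a b c (l₁ + l₂ - l) ν₁ x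
            * complHypergeom a b c l (ν - ν₁) x := by
  rw [sum_choose_mul_complHypergeom_mul_complHypergeom a b c l₁ l₂ ν hx0 hx1,
    sum_choose_mul_complHypergeom_mul_complHypergeom a b c (l₁ + l₂ - l) l ν hx0 hx1,
    Nat.sub_add_cancel hl]
end

section
/- Fix a real N > 0. For every real x and every real y with y²·(1+x²/N) < N, the series Σ_{n=0}^{∞} (yⁿ/n!)·H_n^N(x) converges, with sum equal to the closed-form generating function [(1−xy/N)² + y²/N]^{−N}, a real power of the positive real (1−xy/N)² + y²/N. -/
/-!
The function `f t = (1 + t²/N)^(-N)` is the restriction of `z ↦ (1 + z²/N)^(-N)`, which is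
holomorphic off the two rays `{i b : b² ≥ N}` of the imaginary axis; these lie at distance
`√(N + x²)` from a real point `x`, so the Taylor series of `f` at `x` converges to `f` on that
radius. By Rodrigues' formula, `∑ yⁿ/n! Hₙ(x)` is `(1 + x²/N)^N` times this Taylor series evaluated
at the shift `w = -y (1 + x²/N)`, and the hypothesis on `y` says exactly `w² < N + x²`.
-/

/-- Relativistic Hermite polynomial via Rodrigues' formula:
`H_n^N(x) = (-1)^n (1+x²/N)^(N+n) (dⁿ/dtⁿ)((1+t²/N)^(-N)) |_{t=x}` (rpow powers). -/
noncomputable def relHermite (N : ℝ) (n : ℕ) (x : ℝ) : ℝ :=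
  (-1) ^ n * (1 + x ^ 2 / N) ^ (N + (n : ℝ)) *
    iteratedDeriv n (fun t : ℝ => (1 + t ^ 2 / N) ^ (-N)) x

open Complex Metric
open scoped Nat

theorem iteratedDeriv_ofReal_eq_of_differentiableOn {f : ℝ → ℝ} {F : ℂ → ℂ} {U : Set ℂ}
    (hU : IsOpen U) (hF : DifferentiableOn ℂ F U) (hreal : ∀ u : ℝ, (u : ℂ) ∈ U)
    (hfF : ∀ u : ℝ, (f u : ℂ) = F u) (n : ℕ) (t : ℝ) :
    ((iteratedDeriv n f t : ℝ) : ℂ) = iteratedDeriv n F t := by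
  induction n generalizing t with
  | zero => simpa using hfF t
  | succ n ih =>
    have hd : HasDerivAt (iteratedDeriv n F) (deriv (iteratedDeriv n F) t) t := by
      rw [iteratedDeriv_eq_iterate]
      exact ((hF.analyticOnNhd hU).iterated_deriv n t (hreal t)).differentiableAt.hasDerivAt
    have hre : HasDerivAt (iteratedDeriv n f) (deriv (iteratedDeriv n F) t).re t := by
      simpa [← ih] using hd.real_of_complex
    have hd_real : ((deriv (iteratedDeriv n F) t).re : ℂ) = deriv (iteratedDeriv n F) t :=
      hre.ofReal_comp.unique (by simpa [← ih] using hd.comp_ofReal)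
    rw [iteratedDeriv_succ, iteratedDeriv_succ, hre.deriv, hd_real]

theorem hasSum_taylorSeries_of_differentiableOn_complex {f : ℝ → ℝ} {F : ℂ → ℂ} {U : Set ℂ}
    (hU : IsOpen U) (hF : DifferentiableOn ℂ F U) (hreal : ∀ u : ℝ, (u : ℂ) ∈ U)
    (hfF : ∀ u : ℝ, (f u : ℂ) = F u) {x r w : ℝ} (hball : ball (x : ℂ) r ⊆ U) (hw : |w| < r) :
    HasSum (fun n => w ^ n / n ! * iteratedDeriv n f x) (f (x + w)) := by
  have hmem : ((x + w : ℝ) : ℂ) ∈ ball (x : ℂ) r := by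
    rwa [mem_ball, dist_eq, ← ofReal_sub, add_sub_cancel_left, norm_real, Real.norm_eq_abs]
  have hsum := hasSum_taylorSeries_on_ball (hF.mono hball) hmem
  rw [← hfF] at hsum
  refine hasSum_ofReal.mp (hsum.congr_fun fun n => ?_)
  rw [← iteratedDeriv_ofReal_eq_of_differentiableOn hU hF hreal hfF]
  push_cast
  simp only [smul_eq_mul]
  ring

theorem one_add_sq_div_mem_slitPlane {N : ℝ} (hN : 0 < N) {x : ℝ} {z : ℂ}
    (hz : z ∈ ball (x : ℂ) √(N + x ^ 2)) :
    1 + z ^ 2 / N ∈ slitPlane := by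
  have hdist : (z.re - x) ^ 2 + z.im ^ 2 < N + x ^ 2 := by
    rw [mem_ball, dist_eq, Real.lt_sqrt (norm_nonneg _)] at hz
    simpa [Complex.sq_norm, normSq_apply, ← sq] using hz
  rw [mem_slitPlane_iff]
  by_contra! ⟨hre, him⟩
  simp only [add_re, add_im, one_re, one_im, div_ofReal_re, div_ofReal_im, sq, mul_re, mul_im]
    at hre him
  replace hre : N + (z.re * z.re - z.im * z.im) ≤ 0 := by
    simpa [add_mul, hN.ne'] using mul_nonpos_of_nonpos_of_nonneg hre hN.le
  have him : z.re * z.im = 0 := by field_simp at him; linarith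
  rcases mul_eq_zero.mp him with h | h <;> rw [h] at hre hdist <;> nlinarith

theorem differentiableOn_one_add_sq_div_cpow (N : ℝ) :
    DifferentiableOn ℂ (fun z : ℂ => (1 + z ^ 2 / N) ^ (-N : ℂ)) {z | 1 + z ^ 2 / N ∈ slitPlane} :=
  fun z hz => (DifferentiableAt.cpow_const (f := fun z : ℂ => 1 + z ^ 2 / N) (by fun_prop)
    hz).differentiableWithinAt

theorem hasSum_taylorSeries_one_add_sq_div_rpow {N : ℝ} (hN : 0 < N) {x w : ℝ}
    (hw : w ^ 2 < N + x ^ 2) :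
    HasSum (fun n => w ^ n / n ! * iteratedDeriv n (fun t => (1 + t ^ 2 / N) ^ (-N)) x)
      ((1 + (x + w) ^ 2 / N) ^ (-N)) := by
  refine hasSum_taylorSeries_of_differentiableOn_complex
    (isOpen_slitPlane.preimage (by fun_prop)) (differentiableOn_one_add_sq_div_cpow N)
    (fun u => one_add_sq_div_mem_slitPlane hN (mem_ball_self (by positivity)))
    (fun u => ?_) (fun z hz => one_add_sq_div_mem_slitPlane hN hz) ?_
  · rw [ofReal_cpow (by positivity)]
    push_cast
    rfl
  · rwa [Real.lt_sqrt (abs_nonneg w), sq_abs]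

theorem relHermite_genFun (N : ℝ) (hN : 0 < N) (x y : ℝ)
    (hy : y ^ 2 * (1 + x ^ 2 / N) < N) :
    HasSum (fun n : ℕ => y ^ n / (Nat.factorial n : ℝ) * relHermite N n x)
      (((1 - x * y / N) ^ 2 + y ^ 2 / N) ^ (-N)) := by
  have ha : 0 < 1 + x ^ 2 / N := by positivity
  generalize ha_def : 1 + x ^ 2 / N = a at ha hy
  have hw : (-(y * a)) ^ 2 < N + x ^ 2 := by
    have hNa : N + x ^ 2 = N * a := by rw [← ha_def]; field_simp
    rw [hNa, neg_sq, mul_pow, sq a, ← mul_assoc]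
    exact mul_lt_mul_of_pos_right hy ha
  have hshift : 1 + (x + -(y * a)) ^ 2 / N = a * ((1 - x * y / N) ^ 2 + y ^ 2 / N) := by
    rw [← ha_def]
    field_simp
    ring
  have hc : 0 < (1 - x * y / N) ^ 2 + y ^ 2 / N :=
    pos_of_mul_pos_right (hshift ▸ by positivity) ha.le
  have hsum := (hasSum_taylorSeries_one_add_sq_div_rpow hN hw).mul_left (a ^ N)
  rw [hshift, Real.mul_rpow ha.le hc.le, ← mul_assoc, ← Real.rpow_add ha, add_neg_cancel,
    Real.rpow_zero, one_mul] at hsum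
  refine hsum.congr_fun fun n => ?_
  rw [relHermite, ha_def, Real.rpow_add ha, Real.rpow_natCast]
  ring
end

section
/- Fix a real N > 0 and a natural number l. For every real x > 0 and every real y with |y|·x < N, the series Σ_{ν=0}^{∞} (yᵛ/ν!)·𝒫_ν^N(x,l) converges, with sum equal to the closed-form generating function [1 + y(1+x/N)]^l · (1 + xy/N)^{−N}, where [1+y(1+x/N)]^l is a natural-number power and (1+xy/N)^{−N} is a real power of the positive real 1+xy/N. -/
/-!
The function `t ↦ t ^ l * (1 + t / N) ^ (-N)` extends holomorphically to the disc of radius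
`x + N` around `x`, whose boundary passes through the branch point `-N`. Its Taylor series at `x`
therefore converges at `t = x * (1 + y * (1 + x / N))`, which lies in that disc exactly when
`|y| * x < N`. Since `t - x = x * y * (1 + x / N)`, multiplying the Taylor expansion by
`x ^ (-l) * (1 + x / N) ^ N` turns it term by term into the generating series of `𝒫_ν^N(x, l)`.
-/

/-- Complementary pre-Laguerre polynomial:
`𝒫_ν^N(x,l) = x^(ν-l) (1+x/N)^(N+ν) (dᵛ/dtᵛ)(t^l (1+t/N)^(-N)) |_{t=x}`,
with `x^(ν-l)` a zpow power, `t^l` a natural power, and rpow powers of `1+t/N`. -/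
noncomputable def complPreLaguerre (N : ℝ) (l ν : ℕ) (x : ℝ) : ℝ :=
  x ^ ((ν : ℤ) - (l : ℤ)) * (1 + x / N) ^ (N + (ν : ℝ)) *
    iteratedDeriv ν (fun t : ℝ => t ^ l * (1 + t / N) ^ (-N)) x

open Complex Metric Filter Topology Nat

lemma one_add_div_pos_of_neg_lt {a N : ℝ} (hN : 0 < N) (ha : -N < a) : 0 < 1 + a / N := by
  rw [← div_self hN.ne', ← add_div]
  exact div_pos (by linarith) hN

lemma Complex.ball_ofReal_subset_slitPlane (c : ℝ) : ball (c : ℂ) c ⊆ slitPlane := by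
  intro z hz
  rw [mem_slitPlane_iff]
  left
  have := (abs_re_le_norm (z - c)).trans_lt (mem_ball_iff_norm.mp hz)
  rw [sub_re, ofReal_re] at this
  linarith [neg_abs_le (z.re - c)]

lemma deriv_ofReal_eq_of_eventuallyEq {G : ℂ → ℂ} {g : ℝ → ℝ} {t : ℝ}
    (hG : DifferentiableAt ℂ G t) (hGg : ∀ᶠ s : ℝ in 𝓝 t, G s = g s) :
    deriv G t = deriv g t := by
  have hcomplex : HasDerivAt (fun s : ℝ => (g s : ℂ)) (deriv G t) t :=
    hG.hasDerivAt.comp_ofReal.congr_of_eventuallyEq (hGg.mono fun _ h => h.symm)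
  have hreal : HasDerivAt g (deriv G t).re t :=
    hG.hasDerivAt.real_of_complex.congr_of_eventuallyEq
      (hGg.mono fun s h => by simp [h])
  rw [hreal.deriv]
  exact hcomplex.unique hreal.ofReal_comp

lemma iteratedDeriv_ofReal_eq_of_eqOn {F : ℂ → ℂ} {f : ℝ → ℝ} {U : Set ℂ} {s : Set ℝ}
    (hU : IsOpen U) (hs : IsOpen s) (hF : DifferentiableOn ℂ F U) (hsU : ∀ t ∈ s, (t : ℂ) ∈ U)
    (hFf : ∀ t ∈ s, F t = f t) (n : ℕ) {t : ℝ} (ht : t ∈ s) :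
    iteratedDeriv n F t = iteratedDeriv n f t := by
  induction n generalizing t with
  | zero => simpa using hFf t ht
  | succ n ih =>
    have hFn : AnalyticOnNhd ℂ (iteratedDeriv n F) U := by
      rw [iteratedDeriv_eq_iterate]
      exact (hF.analyticOnNhd hU).iterated_deriv n
    rw [iteratedDeriv_succ, iteratedDeriv_succ]
    exact deriv_ofReal_eq_of_eventuallyEq (hFn _ (hsU t ht)).differentiableAt
      (eventually_of_mem (hs.mem_nhds ht) fun s hs => ih hs)

theorem hasSum_taylorSeries_of_differentiableOn_ball {f : ℝ → ℝ} {F : ℂ → ℂ} {c r : ℝ}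
    (hF : DifferentiableOn ℂ F (ball (c : ℂ) r)) (hFf : ∀ t ∈ ball c r, F t = f t)
    {t : ℝ} (ht : t ∈ ball c r) :
    HasSum (fun n => (n ! : ℝ)⁻¹ * (t - c) ^ n * iteratedDeriv n f c) (f t) := by
  have hsU : ∀ s ∈ ball c r, (s : ℂ) ∈ ball (c : ℂ) r := by
    intro s hs
    rwa [mem_ball, Complex.dist_eq, ← ofReal_sub, norm_real, ← dist_eq_norm]
  have hc : c ∈ ball c r := mem_ball_self (pos_of_mem_ball ht)
  have hTaylor := Complex.hasSum_taylorSeries_on_ball hF (hsU t ht)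
  rw [hFf t ht] at hTaylor
  refine Complex.hasSum_ofReal.mp (hTaylor.congr_fun fun n => ?_)
  rw [iteratedDeriv_ofReal_eq_of_eqOn isOpen_ball isOpen_ball hF hsU hFf n hc]
  push_cast
  simp only [smul_eq_mul]
  ring

lemma hasSum_taylorSeries_pow_mul_one_add_div_rpow {N c t : ℝ} (hN : 0 < N) (l : ℕ)
    (ht : |t - c| < c + N) :
    HasSum (fun n => (n ! : ℝ)⁻¹ * (t - c) ^ n *
        iteratedDeriv n (fun s : ℝ => s ^ l * (1 + s / N) ^ (-N)) c)
      (t ^ l * (1 + t / N) ^ (-N)) := by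
  refine hasSum_taylorSeries_of_differentiableOn_ball (F := fun z => z ^ l * (1 + z / N) ^ (-N : ℂ))
    (r := c + N) ?_ ?_ (by rwa [mem_ball, Real.dist_eq])
  · intro z hz
    have hslit : 1 + z / N ∈ slitPlane := by
      refine Complex.ball_ofReal_subset_slitPlane (1 + c / N) ?_
      rw [mem_ball_iff_norm] at hz ⊢
      have : 1 + z / N - ((1 + c / N : ℝ) : ℂ) = (z - c) / N := by push_cast; ring
      rw [this, norm_div, norm_real, Real.norm_of_nonneg hN.le, div_lt_iff₀ hN]
      linarith [show (1 + c / N) * N = N + c by field_simp]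
    fun_prop (disch := exact hslit)
  · intro s hs
    rw [mem_ball, Real.dist_eq] at hs
    have hpos := one_add_div_pos_of_neg_lt hN (by linarith [neg_abs_le (s - c)] : -N < s)
    push_cast [ofReal_cpow hpos.le]
    rfl

theorem complPreLaguerre_genFun (N : ℝ) (hN : 0 < N) (l : ℕ) (x y : ℝ) (hx : 0 < x)
    (hy : |y| * x < N) :
    HasSum (fun ν : ℕ => y ^ ν / (Nat.factorial ν : ℝ) * complPreLaguerre N l ν x)
      ((1 + y * (1 + x / N)) ^ l * (1 + x * y / N) ^ (-N)) := by
  have hxN : 0 < 1 + x / N := by positivity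
  have hxyN : 0 < 1 + x * y / N := by
    have : |x * y| = |y| * x := by rw [abs_mul, abs_of_pos hx, mul_comm]
    exact one_add_div_pos_of_neg_lt hN (by linarith [neg_abs_le (x * y)])
  have ht : |x * (1 + y * (1 + x / N)) - x| < x + N := by
    rw [show x * (1 + y * (1 + x / N)) - x = y * x * (1 + x / N) by ring, abs_mul, abs_mul,
      abs_of_pos hx, abs_of_pos hxN, show x + N = N * (1 + x / N) by field_simp; ring]
    exact mul_lt_mul_of_pos_right hy hxN
  have hTaylor := (hasSum_taylorSeries_pow_mul_one_add_div_rpow hN l ht).mul_left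
    (x ^ (-(l : ℤ)) * (1 + x / N) ^ N)
  have hsum : (1 + y * (1 + x / N)) ^ l * (1 + x * y / N) ^ (-N) =
      x ^ (-(l : ℤ)) * (1 + x / N) ^ N *
        ((x * (1 + y * (1 + x / N))) ^ l * (1 + x * (1 + y * (1 + x / N)) / N) ^ (-N)) := by
    rw [show 1 + x * (1 + y * (1 + x / N)) / N = (1 + x / N) * (1 + x * y / N) by field_simp; ring,
      Real.mul_rpow hxN.le hxyN.le, Real.rpow_neg hxN.le, mul_pow, zpow_neg, zpow_natCast]
    field_simp
  rw [hsum]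
  refine hTaylor.congr_fun fun n => ?_
  rw [complPreLaguerre, zpow_sub₀ hx.ne', zpow_neg, zpow_natCast, zpow_natCast, Real.rpow_add hxN,
    Real.rpow_natCast,
    show x * (1 + y * (1 + x / N)) - x = x * y * (1 + x / N) by ring, mul_pow, mul_pow]
  ring
end

section
/- Fix a real N > 0 and a natural number l. For every natural number ν and every real x > 0, the complementary pre-Laguerre polynomial has the explicit form 𝒫_ν^N(x,l) = ν! · Σ_{μ=0}^{ν} binom(l,μ)·C(−N, ν−μ)·(x/N)^{ν−μ}·(1+x/N)^μ, where binom(l,μ) is the usual binomial coefficient (zero for μ > l) and C(r,k) = (∏_{i=0}^{k−1}(r−i))/k! is the generalized binomial coefficient. -/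
/-!
Apply the Leibniz rule to `t ^ l * (1 + t / N) ^ (-N)`. The `μ`-th derivative of `t ^ l` is
`l.descFactorial μ * t ^ (l - μ)`, and since `1 + t / N` is affine in `t`, the `k`-th
derivative of `(1 + t / N) ^ r` is `N⁻¹ ^ k * r (r - 1) ⋯ (r - k + 1) * (1 + t / N) ^ (r - k)`.
Against the prefactor `x ^ (ν - l) * (1 + x / N) ^ (N + ν)` the powers collapse to
`x ^ (ν - μ) * (1 + x / N) ^ μ`, and `ν.choose μ * l.descFactorial μ * (-N) (-N - 1) ⋯`
regroups as `ν! * l.choose μ * genBinom (-N) (ν - μ)`.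
-/

theorem genBinom_mul_factorial (r : ℝ) (k : ℕ) :
    genBinom r k * k.factorial = (descPochhammer ℝ k).eval r := by
  rw [genBinom, descPochhammer_eval_eq_prod_range, div_mul_cancel₀ _ (by positivity)]

theorem iteratedDeriv_comp_mul_add {𝕜 F : Type*} [NontriviallyNormedField 𝕜]
    [NormedAddCommGroup F] [NormedSpace 𝕜 F] (f : 𝕜 → F) (a b : 𝕜) (n : ℕ) :
    iteratedDeriv n (fun t => f (a * t + b))
      = fun t => a ^ n • iteratedDeriv n f (a * t + b) := by
  induction n with
  | zero => simp
  | succ n ih =>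
    ext t
    rw [iteratedDeriv_succ, ih, deriv_fun_const_smul_field, pow_succ, mul_smul, iteratedDeriv_succ]
    congr 1
    exact (deriv_comp_mul_left a (fun u => iteratedDeriv n f (u + b)) t).trans
      (by rw [deriv_comp_add_const])

theorem iteratedDeriv_one_add_div_rpow (N r x : ℝ) (n : ℕ) :
    iteratedDeriv n (fun t => (1 + t / N) ^ r) x
      = N⁻¹ ^ n * (descPochhammer ℝ n).eval r * (1 + x / N) ^ (r - n) := by
  have affine (t : ℝ) : 1 + t / N = N⁻¹ * t + 1 := by ring
  simp only [affine]
  rw [iteratedDeriv_comp_mul_add (fun u : ℝ => u ^ r)]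
  simp only [smul_eq_mul, iteratedDeriv_eq_iterate, Real.iter_deriv_rpow_const]
  ring

theorem iteratedDeriv_pow_mul_one_add_div_rpow {N x : ℝ} (r : ℝ) (hx : 1 + x / N ≠ 0)
    (l ν : ℕ) :
    iteratedDeriv ν (fun t => t ^ l * (1 + t / N) ^ r) x
      = ∑ μ ∈ Finset.range (ν + 1), ν.choose μ * (l.descFactorial μ * x ^ (l - μ))
          * (N⁻¹ ^ (ν - μ) * (descPochhammer ℝ (ν - μ)).eval r
            * (1 + x / N) ^ (r - (ν - μ : ℕ))) := by
  have hpow : ContDiffAt ℝ ν (· ^ l) x := contDiffAt_id.pow l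
  have hrpow : ContDiffAt ℝ ν (fun t => (1 + t / N) ^ r) x :=
    ContDiffAt.rpow_const_of_ne (by fun_prop) hx
  simp only [iteratedDeriv_fun_mul hpow hrpow, iteratedDeriv_pow,
    iteratedDeriv_one_add_div_rpow]

theorem zpow_sub_mul_descFactorial_mul_pow {x : ℝ} (hx : x ≠ 0) {l μ ν : ℕ} (hμ : μ ≤ ν) :
    x ^ ((ν : ℤ) - l) * (l.descFactorial μ * x ^ (l - μ))
      = l.descFactorial μ * x ^ (ν - μ) := by
  rcases le_or_gt μ l with hμl | hlμ
  · rw [mul_left_comm, ← zpow_natCast, ← zpow_natCast, ← zpow_add₀ hx]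
    push_cast [hμl, hμ]
    ring_nf
  · simp [Nat.descFactorial_eq_zero_iff_lt.mpr hlμ]

theorem rpow_add_mul_rpow_neg_sub {R : ℝ} (hR : 0 < R) (N : ℝ) {μ ν : ℕ} (hμ : μ ≤ ν) :
    R ^ (N + ν) * R ^ (-N - (ν - μ : ℕ)) = R ^ μ := by
  rw [← Real.rpow_add hR, ← Real.rpow_natCast]
  push_cast [hμ]
  ring_nf

theorem complPreLaguerre_explicit (N : ℝ) (hN : 0 < N) (l ν : ℕ) (x : ℝ) (hx : 0 < x) :
    complPreLaguerre N l ν x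
      = (Nat.factorial ν : ℝ) *
          ∑ μ ∈ Finset.range (ν + 1),
            (Nat.choose l μ : ℝ) * genBinom (-N) (ν - μ)
              * (x / N) ^ (ν - μ) * (1 + x / N) ^ μ := by
  have hR : 0 < 1 + x / N := by positivity
  rw [complPreLaguerre, iteratedDeriv_pow_mul_one_add_div_rpow _ hR.ne', Finset.mul_sum,
    Finset.mul_sum]
  refine Finset.sum_congr rfl fun μ hμ => ?_
  have hμν : μ ≤ ν := Nat.lt_succ_iff.mp (Finset.mem_range.mp hμ)
  have hx_pow := zpow_sub_mul_descFactorial_mul_pow hx.ne' (l := l) hμν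
  have hR_pow := rpow_add_mul_rpow_neg_sub hR N hμν
  calc _ = ν.choose μ * (x ^ ((ν : ℤ) - l) * (l.descFactorial μ * x ^ (l - μ)))
          * N⁻¹ ^ (ν - μ) * (descPochhammer ℝ (ν - μ)).eval (-N)
          * ((1 + x / N) ^ (N + ν) * (1 + x / N) ^ (-N - (ν - μ : ℕ))) := by ring
    _ = ν.choose μ * (l.descFactorial μ * x ^ (ν - μ)) * N⁻¹ ^ (ν - μ)
          * (descPochhammer ℝ (ν - μ)).eval (-N) * (1 + x / N) ^ μ := by
      rw [hx_pow, hR_pow]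
    _ = _ := by
      rw [← genBinom_mul_factorial, Nat.descFactorial_eq_factorial_mul_choose,
        ← Nat.choose_mul_factorial_mul_factorial hμν]
      push_cast
      ring
end
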